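/- arXiv:2211.07387 — 3 statements merged into one kernel-verified Lean document; each statement's English description precedes it below -/
import Mathlib

section
/- (Lemma 4) Let λ > 0, let d, n ≥ 1, and let x_1, …, x_n ∈ ℝ^d satisfy ‖x_k‖₂ ≤ 1 for all k. For each k define A(k) = λ·I_d + Σ_{i=1}^{k} x_i x_iᵀ. Then Σ_{k=1}^{n} x_kᵀ A(k)^{−1} x_k ≤ 2d·log(1 + n/(dλ)). -/
/-!
Write `A k = A (k - 1) + x_k x_kᵀ`. The matrix determinant lemma applied to this rank-one
update gives `det A (k - 1) = det A k * (1 - x_kᵀ A(k)⁻¹ x_k)`, so each term of the sum equals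
`1 - t⁻¹ ≤ log t` with `t = det A k / det A (k - 1)`, and the sum telescopes to at most
`log det A n - log det A 0`. Finally `det A 0 = λ^d`, while AM-GM on the eigenvalues bounds
`det A n` by `(trace A n / d)^d ≤ (λ + n / d)^d`.
-/

open Matrix Finset Real

theorem Real.prod_le_sum_div_card_pow {ι : Type*} (s : Finset ι) (z : ι → ℝ)
    (hz : ∀ i ∈ s, 0 ≤ z i) : ∏ i ∈ s, z i ≤ ((∑ i ∈ s, z i) / #s) ^ #s := by
  rcases s.eq_empty_or_nonempty with rfl | hs
  · simp
  have amgm := geom_mean_le_arith_mean s (fun _ ↦ 1) z (fun _ _ ↦ zero_le_one)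
    (by simpa using hs.card_pos) hz
  simp only [rpow_one, sum_const, nsmul_eq_mul, mul_one, one_mul] at amgm
  calc ∏ i ∈ s, z i = ((∏ i ∈ s, z i) ^ (#s : ℝ)⁻¹) ^ #s :=
        (rpow_inv_natCast_pow (prod_nonneg hz) hs.card_pos.ne').symm
    _ ≤ ((∑ i ∈ s, z i) / #s) ^ #s := by
        gcongr
        exact rpow_nonneg (prod_nonneg hz) _

namespace Matrix

variable {ι : Type*} [Fintype ι]

theorem PosDef.add_vecMulVec_self {B : Matrix ι ι ℝ} (hB : B.PosDef) (v : ι → ℝ) :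
    (B + vecMulVec v v).PosDef :=
  hB.add_posSemidef (by simpa using posSemidef_vecMulVec_self_star v)

theorem posDef_of_succ_eq_add_vecMulVec_self {A : ℕ → Matrix ι ι ℝ} {x : ℕ → ι → ℝ}
    (hA₀ : (A 0).PosDef) (hA : ∀ k, A (k + 1) = A k + vecMulVec (x (k + 1)) (x (k + 1)))
    (k : ℕ) : (A k).PosDef := by
  induction k with
  | zero => exact hA₀
  | succ k ih => exact hA k ▸ ih.add_vecMulVec_self _

variable [DecidableEq ι]

theorem PosSemidef.det_le_trace_div_card_pow {A : Matrix ι ι ℝ} (hA : A.PosSemidef) :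
    A.det ≤ (A.trace / Fintype.card ι) ^ Fintype.card ι := by
  rw [hA.isHermitian.det_eq_prod_eigenvalues, hA.isHermitian.trace_eq_sum_eigenvalues]
  simpa using Real.prod_le_sum_div_card_pow univ _ fun i _ ↦ hA.eigenvalues_nonneg i

theorem PosDef.log_det_le_card_mul_log {A : Matrix ι ι ℝ} (hA : A.PosDef) {c : ℝ}
    (hc : A.trace ≤ Fintype.card ι * c) : log A.det ≤ Fintype.card ι * log c := by
  rcases (Fintype.card ι).eq_zero_or_pos with hι | hι
  · have := Fintype.card_eq_zero_iff.mp hι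
    simp
  have hι' : (0 : ℝ) < Fintype.card ι := by exact_mod_cast hι
  rw [← log_pow]
  refine log_le_log hA.det_pos (hA.posSemidef.det_le_trace_div_card_pow.trans ?_)
  gcongr
  · exact div_nonneg hA.posSemidef.trace_nonneg hι'.le
  · rwa [div_le_iff₀ hι', mul_comm]

theorem det_sub_vecMulVec {α : Type*} [CommRing α] {A : Matrix ι ι α} (hA : IsUnit A.det)
    (u v : ι → α) : (A - vecMulVec u v).det = A.det * (1 - v ⬝ᵥ A⁻¹ *ᵥ u) := by
  rw [sub_eq_add_neg, ← neg_vecMulVec, vecMulVec_eq Unit,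
    det_add_replicateCol_mul_replicateRow hA, det_unique (1 + _),
    Matrix.mul_assoc, ← replicateCol_mulVec]
  simp [mulVec_neg, sub_eq_add_neg]

theorem dotProduct_inv_mulVec_le_log_det_sub {B : Matrix ι ι ℝ} (hB : B.PosDef) (v : ι → ℝ) :
    v ⬝ᵥ (B + vecMulVec v v)⁻¹ *ᵥ v ≤ log (B + vecMulVec v v).det - log B.det := by
  set A := B + vecMulVec v v
  have hA : A.PosDef := hB.add_vecMulVec_self v
  have hdet : B.det = A.det * (1 - v ⬝ᵥ A⁻¹ *ᵥ v) := by
    rw [← det_sub_vecMulVec (isUnit_iff_ne_zero.mpr hA.det_pos.ne'), add_sub_cancel_right]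
  have hratio : v ⬝ᵥ A⁻¹ *ᵥ v = 1 - (A.det / B.det)⁻¹ := by
    rw [inv_div, hdet, mul_div_cancel_left₀ _ hA.det_pos.ne']
    ring
  rw [hratio, ← log_div hA.det_pos.ne' hB.det_pos.ne']
  exact one_sub_inv_le_log_of_pos (div_pos hA.det_pos hB.det_pos)

theorem sum_dotProduct_inv_mulVec_le_log_det_sub {A : ℕ → Matrix ι ι ℝ} {x : ℕ → ι → ℝ}
    (hA₀ : (A 0).PosDef) (hA : ∀ k, A (k + 1) = A k + vecMulVec (x (k + 1)) (x (k + 1)))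
    (n : ℕ) : ∑ k ∈ Icc 1 n, x k ⬝ᵥ (A k)⁻¹ *ᵥ x k ≤ log (A n).det - log (A 0).det := by
  induction n with
  | zero => simp
  | succ n ih =>
    rw [sum_Icc_succ_top (by omega), hA n]
    have := dotProduct_inv_mulVec_le_log_det_sub
      (posDef_of_succ_eq_add_vecMulVec_self hA₀ hA n) (x (n + 1))
    linarith

end Matrix

theorem elliptical_potential_bound_general (lam : ℝ) (hlam : 0 < lam)
    (d n : ℕ) (hd : 1 ≤ d)
    (x : ℕ → Fin d → ℝ) (hx : ∀ k, Real.sqrt (x k ⬝ᵥ x k) ≤ 1)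
    (A : ℕ → Matrix (Fin d) (Fin d) ℝ)
    (hA : ∀ k, A k = lam • (1 : Matrix (Fin d) (Fin d) ℝ)
        + ∑ i ∈ Finset.Icc 1 k, Matrix.vecMulVec (x i) (x i)) :
    ∑ k ∈ Finset.Icc 1 n, x k ⬝ᵥ (A k)⁻¹.mulVec (x k)
      ≤ 2 * d * Real.log (1 + (n : ℝ) / (d * lam)) := by
  have hstep : ∀ k, A (k + 1) = A k + vecMulVec (x (k + 1)) (x (k + 1)) := fun k ↦ by
    rw [hA, hA, sum_Icc_succ_top (by omega), add_assoc]
  have hA₀ : A 0 = lam • 1 := by simp [hA]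
  have hA₀pos : (A 0).PosDef := hA₀ ▸ PosDef.one.smul hlam
  have hd₀ : (d : ℝ) ≠ 0 := by exact_mod_cast (by omega : d ≠ 0)
  have htrace : (A n).trace ≤ d * (lam + n / d) := by
    rw [hA, trace_add, trace_smul, trace_one, trace_sum, Fintype.card_fin, smul_eq_mul,
      mul_add, mul_div_cancel₀ _ hd₀, mul_comm]
    gcongr
    simpa [trace_vecMulVec] using sum_le_card_nsmul (Icc 1 n) _ 1 fun i _ ↦ sqrt_le_one.mp (hx i)
  have hlogdet : log (A n).det ≤ d * log (lam + n / d) := by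
    simpa using (posDef_of_succ_eq_add_vecMulVec_self hA₀pos hstep n).log_det_le_card_mul_log
      (by simpa using htrace)
  calc ∑ k ∈ Icc 1 n, x k ⬝ᵥ (A k)⁻¹ *ᵥ x k
      ≤ log (A n).det - log (A 0).det := sum_dotProduct_inv_mulVec_le_log_det_sub hA₀pos hstep n
    _ ≤ d * log (lam + n / d) - d * log lam := by
        rw [hA₀, det_smul, det_one, mul_one, Fintype.card_fin, log_pow]
        gcongr
    _ = d * log (1 + n / (d * lam)) := by
        rw [← mul_sub, ← log_div (by positivity) hlam.ne', add_div, div_self hlam.ne', div_div]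
    _ ≤ 2 * d * log (1 + n / (d * lam)) := by
        rw [mul_assoc]
        exact le_mul_of_one_le_left
          (mul_nonneg d.cast_nonneg (log_nonneg (le_add_of_nonneg_right (by positivity))))
          one_le_two

/-- Lemma 4, elliptical potential: with
`A(k) = λ I + ∑_{i=1}^k xᵢ xᵢᵀ` and `‖x_k‖₂ ≤ 1`, one has
`∑_{k=1}^n x_kᵀ A(k)⁻¹ x_k ≤ 2 d log(1 + n/(dλ))`. -/
theorem elliptical_potential_bound (lam : ℝ) (hlam : 0 < lam)
    (d n : ℕ) (hd : 1 ≤ d) (hn : 1 ≤ n)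
    (x : ℕ → Fin d → ℝ) (hx : ∀ k, Real.sqrt (x k ⬝ᵥ x k) ≤ 1)
    (A : ℕ → Matrix (Fin d) (Fin d) ℝ)
    (hA : ∀ k, A k = lam • (1 : Matrix (Fin d) (Fin d) ℝ)
        + ∑ i ∈ Finset.Icc 1 k, Matrix.vecMulVec (x i) (x i)) :
    ∑ k ∈ Finset.Icc 1 n, x k ⬝ᵥ (A k)⁻¹.mulVec (x k)
      ≤ 2 * d * Real.log (1 + (n : ℝ) / (d * lam)) :=
  elliptical_potential_bound_general lam hlam d n hd x hx A hA
end

section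
/- Let 𝒜 be a nonempty finite set, let x : 𝒜 → ℝ^d, let θ*, θ̂ ∈ ℝ^d, and let Δ : 𝒜 → ℝ satisfy |x_aᵀ(θ̂ − θ*)| ≤ Δ_a for every a ∈ 𝒜. If a_k ∈ 𝒜 maximizes a ↦ x_aᵀ θ̂ + Δ_a over 𝒜, then max_{a ∈ 𝒜} x_aᵀ θ* − x_{a_k}ᵀ θ* ≤ 2·Δ_{a_k}. -/
open Matrix

/-- optimism in the face of uncertainty: if `|x_aᵀ(θ̂ − θ*)| ≤ Δ_a`
for every arm and `a_k` maximizes the UCB index `x_aᵀθ̂ + Δ_a`, then the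
immediate regret `max_a x_aᵀθ* − x_{a_k}ᵀθ*` is at most `2 Δ_{a_k}`. -/
theorem immediate_regret_le_two_exploration {d : ℕ}
    (𝒜 : Type*) [Fintype 𝒜] [Nonempty 𝒜]
    (x : 𝒜 → Fin d → ℝ) (θstar θhat : Fin d → ℝ) (Δ : 𝒜 → ℝ)
    (hΔ : ∀ a, |x a ⬝ᵥ (θhat - θstar)| ≤ Δ a)
    (ak : 𝒜) (hak : ∀ a, x a ⬝ᵥ θhat + Δ a ≤ x ak ⬝ᵥ θhat + Δ ak) :
    (⨆ a, x a ⬝ᵥ θstar) - x ak ⬝ᵥ θstar ≤ 2 * Δ ak := by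
  rw [sub_le_iff_le_add]
  apply ciSup_le
  intro a
  have h1 := abs_le.mp (hΔ a)
  have h2 := abs_le.mp (hΔ ak)
  rw [dotProduct_sub] at h1 h2
  have := hak a
  linarith [h1.1, h1.2, h2.1, h2.2]
end

section
/- Let λ > 0, let D ∈ ℝ^{k×d}, let A = λ·I_d + Dᵀ D, let θ*, θ_S ∈ ℝ^d and ε ∈ ℝ^k, and define θ̂ = A^{−1} Dᵀ (D θ* + ε) − (A^{−1} Dᵀ D − I_d) θ_S. Then √( (θ̂ − θ*)ᵀ A (θ̂ − θ*) ) ≤ √( εᵀ D A^{−1} Dᵀ ε ) + √λ · ‖θ_S − θ*‖₂. -/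
/-!
Since `A⁻¹ DᵀD = 1 - λ A⁻¹`, the estimation error is `θ̂ - θ* = A⁻¹Dᵀε + λ A⁻¹(θ_S - θ*)`, and the
triangle inequality for the seminorm `‖·‖_A` splits the bound in two. The noise term satisfies
`‖A⁻¹Dᵀε‖_A² = εᵀ D A⁻¹ Dᵀ ε`. For the bias term, `A² - λA = λ DᵀD + (DᵀD)² ⪰ 0` gives
`λ ‖A⁻¹s‖_A² ≤ ‖s‖₂²`, hence `‖λ A⁻¹ s‖_A ≤ √λ ‖s‖₂`.
-/

open Matrix

namespace Matrix

variable {m n : Type*} [Fintype m] [Fintype n]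

lemma PosSemidef.sqrt_dotProduct_mulVec_add_le {A : Matrix n n ℝ} (hA : A.PosSemidef)
    (x y : n → ℝ) :
    √((x + y) ⬝ᵥ A *ᵥ (x + y)) ≤ √(x ⬝ᵥ A *ᵥ x) + √(y ⬝ᵥ A *ᵥ y) := by
  let E := A.toSeminormedAddCommGroup hA
  have hnorm (v : n → ℝ) : @norm _ E.toNorm v = √(v ⬝ᵥ A *ᵥ v) := by
    rw [dotProduct_comm]
    rfl
  simpa only [hnorm] using @norm_add_le _ E.toSeminormedAddGroup x y

lemma posSemidef_transpose_mul_self (D : Matrix m n ℝ) : (Dᵀ * D).PosSemidef := by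
  simpa using posSemidef_conjTranspose_mul_self D

lemma inv_mulVec_dotProduct_mulVec_inv_mulVec [DecidableEq n] {A : Matrix n n ℝ}
    (hA : IsUnit A.det) (x : n → ℝ) : (A⁻¹ *ᵥ x) ⬝ᵥ A *ᵥ (A⁻¹ *ᵥ x) = x ⬝ᵥ A⁻¹ *ᵥ x := by
  rw [mulVec_mulVec, mul_nonsing_inv A hA, one_mulVec, dotProduct_comm]

lemma transpose_mulVec_dotProduct_mulVec (D : Matrix m n ℝ) (B : Matrix n n ℝ) (ε : m → ℝ) :
    (Dᵀ *ᵥ ε) ⬝ᵥ B *ᵥ (Dᵀ *ᵥ ε) = ε ⬝ᵥ (D * B * Dᵀ) *ᵥ ε := by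
  rw [← mulVec_mulVec, ← mulVec_mulVec, dotProduct_mulVec ε, ← vecMul_transpose,
    transpose_transpose]

variable [DecidableEq n]

lemma mul_dotProduct_mulVec_le_mulVec_dotProduct_mulVec {lam : ℝ} (hlam : 0 ≤ lam)
    {M A : Matrix n n ℝ} (hM : M.PosSemidef) (hA : A = lam • 1 + M) (z : n → ℝ) :
    lam * (z ⬝ᵥ A *ᵥ z) ≤ (A *ᵥ z) ⬝ᵥ A *ᵥ z := by
  subst hA
  have hzMz : 0 ≤ z ⬝ᵥ M *ᵥ z := by simpa using hM.dotProduct_mulVec_nonneg z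
  have hMz : 0 ≤ (M *ᵥ z) ⬝ᵥ (M *ᵥ z) := by simpa using dotProduct_star_self_nonneg (M *ᵥ z)
  simp only [add_mulVec, smul_mulVec, one_mulVec, dotProduct_add, add_dotProduct,
    dotProduct_smul, smul_dotProduct, smul_eq_mul, dotProduct_comm (M *ᵥ z) z]
  nlinarith

lemma sqrt_smul_inv_mulVec_le {lam : ℝ} (hlam : 0 ≤ lam) {M A : Matrix n n ℝ}
    (hM : M.PosSemidef) (hA : A = lam • 1 + M) (hdet : IsUnit A.det) (s : n → ℝ) :
    √((lam • (A⁻¹ *ᵥ s)) ⬝ᵥ A *ᵥ (lam • (A⁻¹ *ᵥ s))) ≤ √lam * √(s ⬝ᵥ s) := by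
  have hs : A *ᵥ (A⁻¹ *ᵥ s) = s := by rw [mulVec_mulVec, mul_nonsing_inv A hdet, one_mulVec]
  have key := mul_dotProduct_mulVec_le_mulVec_dotProduct_mulVec hlam hM hA (A⁻¹ *ᵥ s)
  rw [hs] at key
  rw [← Real.sqrt_mul hlam]
  refine Real.sqrt_le_sqrt ?_
  simp only [mulVec_smul, smul_dotProduct, dotProduct_smul, smul_eq_mul, hs]
  exact mul_le_mul_of_nonneg_left key hlam

lemma biased_ridge_error_eq {lam : ℝ} {D : Matrix m n ℝ} {A : Matrix n n ℝ}
    (hA : A = lam • 1 + Dᵀ * D) (hdet : IsUnit A.det) (θstar θS : n → ℝ) (ε : m → ℝ) :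
    A⁻¹ *ᵥ (Dᵀ *ᵥ (D *ᵥ θstar + ε)) - (A⁻¹ * Dᵀ * D - 1) *ᵥ θS - θstar
      = A⁻¹ *ᵥ (Dᵀ *ᵥ ε) + lam • (A⁻¹ *ᵥ (θS - θstar)) := by
  have hAinv_gram : A⁻¹ * Dᵀ * D = 1 - lam • A⁻¹ := by
    rw [Matrix.mul_assoc, show Dᵀ * D = A - lam • 1 by rw [hA]; abel, Matrix.mul_sub,
      nonsing_inv_mul A hdet, Matrix.mul_smul, Matrix.mul_one]
  rw [mulVec_add, mulVec_add, mulVec_mulVec, mulVec_mulVec, hAinv_gram]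
  simp only [sub_mulVec, one_mulVec, smul_mulVec, mulVec_sub]
  module

end Matrix

/-- confidence bound for the biased-regularization estimator:
`‖θ̂ − θ*‖_A ≤ ‖Dᵀε‖_{A⁻¹} + √λ ‖θ_S − θ*‖₂` where `A = λ I + DᵀD` and
`θ̂ = A⁻¹Dᵀ(Dθ* + ε) − (A⁻¹DᵀD − I)θ_S`. -/
theorem biased_estimator_confidence_bound {k d : ℕ} (lam : ℝ) (hlam : 0 < lam)
    (D : Matrix (Fin k) (Fin d) ℝ) (A : Matrix (Fin d) (Fin d) ℝ)
    (hA : A = lam • (1 : Matrix (Fin d) (Fin d) ℝ) + Dᵀ * D)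
    (θstar θS : Fin d → ℝ) (ε : Fin k → ℝ)
    (θhat : Fin d → ℝ)
    (hθhat : θhat = A⁻¹.mulVec (Dᵀ.mulVec (D.mulVec θstar + ε))
        - (A⁻¹ * Dᵀ * D - 1).mulVec θS) :
    Real.sqrt ((θhat - θstar) ⬝ᵥ A.mulVec (θhat - θstar))
      ≤ Real.sqrt (ε ⬝ᵥ (D * A⁻¹ * Dᵀ).mulVec ε)
        + Real.sqrt lam * Real.sqrt ((θS - θstar) ⬝ᵥ (θS - θstar)) := by
  have hDD := posSemidef_transpose_mul_self D
  have hApos : A.PosDef := hA ▸ (PosDef.one.smul hlam).add_posSemidef hDD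
  have hdet : IsUnit A.det := isUnit_iff_ne_zero.mpr hApos.det_pos.ne'
  rw [hθhat, biased_ridge_error_eq hA hdet]
  refine (hApos.posSemidef.sqrt_dotProduct_mulVec_add_le _ _).trans (add_le_add ?_ ?_)
  · rw [inv_mulVec_dotProduct_mulVec_inv_mulVec hdet, transpose_mulVec_dotProduct_mulVec]
  · exact sqrt_smul_inv_mulVec_le hlam.le hDD hA hdet _
end
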